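/- arXiv:1909.04258 — 4 statements merged into one kernel-verified Lean document; each statement's English description precedes it below -/
import Mathlib

section
/- Let X be a normed space and let (x_n)_{n≥1} be a bounded sequence in X which is 2-co-lacunary. Then for every x ∈ X there exists m ∈ ℕ such that the shifted sequence (x_n − x)_{n≥m} is 2-co-lacunary. -/
open Filter Topology

/-- A sequence `x` in a complex normed space is 2-co-lacunary if there is `C > 0` such that
`(∑ |λₙ|²)^(1/2) ≤ C ‖∑ λₙ xₙ‖` for every finitely supported scalar sequence. -/
def IsTwoColacunary {X : Type*} [NormedAddCommGroup X] [NormedSpace ℂ X] (x : ℕ → X) : Prop :=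
  ∃ C > (0 : ℝ), ∀ (l : ℕ → ℂ) (s : Finset ℕ),
    Real.sqrt (∑ n ∈ s, ‖l n‖ ^ 2) ≤ C * ‖∑ n ∈ s, l n • x n‖

/-- Perturbation lemma, part (i): if a bounded sequence `(xₙ)` is 2-co-lacunary and `x ∈ X`,
then for some `m` the shifted sequence `(x_{n+m} - x)ₙ` is 2-co-lacunary. -/
theorem twoColacunary_sub_const_tail
    {X : Type*} [NormedAddCommGroup X] [NormedSpace ℂ X]
    (x : ℕ → X) (hbdd : ∃ M : ℝ, ∀ n, ‖x n‖ ≤ M) (hx : IsTwoColacunary x) (y : X) :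
    ∃ m : ℕ, IsTwoColacunary (fun n => x (n + m) - y) := by
  obtain ⟨C, hC, hCo⟩ := hx
  by_cases hy : y = 0
  · exact ⟨0, C, hC, fun l s => by simpa [hy] using hCo l s⟩
  have hy' : 0 < ‖y‖ := norm_pos_iff.mpr hy
  by_contra hcon
  push_neg at hcon
  have key : ∀ m : ℕ, ∃ (l : ℕ → ℂ) (s : Finset ℕ),
      (2 * C) * ‖∑ n ∈ s, l n • (x (n + m) - y)‖ < Real.sqrt (∑ n ∈ s, ‖l n‖ ^ 2) := by
    intro m
    have h1 := hcon m
    rw [IsTwoColacunary] at h1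
    push_neg at h1
    obtain ⟨l, s, hls⟩ := h1 (2 * C) (by positivity)
    exact ⟨l, s, hls⟩
  obtain ⟨l₁, s₁, hw₁⟩ := key 0
  simp only [Nat.add_zero] at hw₁
  set m₂ := s₁.sup id + 1 with hm₂
  obtain ⟨l₂, s₂, hw₂⟩ := key m₂
  set P₁ := ∑ n ∈ s₁, ‖l₁ n‖ ^ 2 with hP₁def
  set P₂ := ∑ n ∈ s₂, ‖l₂ n‖ ^ 2 with hP₂def
  set Λ₁ := ∑ n ∈ s₁, l₁ n with hΛ₁def
  set Λ₂ := ∑ n ∈ s₂, l₂ n with hΛ₂def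
  set T₁ := ∑ n ∈ s₁, l₁ n • (x n - y) with hT₁def
  set T₂ := ∑ n ∈ s₂, l₂ n • (x (n + m₂) - y) with hT₂def
  set S₁ := ∑ n ∈ s₁, l₁ n • x n with hS₁def
  set S₂ := ∑ n ∈ s₂, l₂ n • x (n + m₂) with hS₂def
  have hP₁ : (0:ℝ) ≤ P₁ := Finset.sum_nonneg fun n _ => by positivity
  have hP₂ : (0:ℝ) ≤ P₂ := Finset.sum_nonneg fun n _ => by positivity
  set a₁ := Real.sqrt P₁ with ha₁def
  set a₂ := Real.sqrt P₂ with ha₂def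
  have ha₁sq : a₁ ^ 2 = P₁ := Real.sq_sqrt hP₁
  have ha₂sq : a₂ ^ 2 = P₂ := Real.sq_sqrt hP₂
  have ha₁pos : 0 < a₁ := lt_of_le_of_lt (by positivity) hw₁
  have ha₂pos : 0 < a₂ := lt_of_le_of_lt (by positivity) hw₂
  have hT₁S : T₁ = S₁ - Λ₁ • y := by
    simp [hT₁def, hS₁def, hΛ₁def, smul_sub, Finset.sum_sub_distrib, Finset.sum_smul]
  have hT₂S : T₂ = S₂ - Λ₂ • y := by
    simp [hT₂def, hS₂def, hΛ₂def, smul_sub, Finset.sum_sub_distrib, Finset.sum_smul]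
  -- injectivity of shift
  have inj : ∀ a ∈ s₂, ∀ b ∈ s₂, a + m₂ = b + m₂ → a = b := by
    intro a _ b _ h; omega
  have hnotin : ∀ n : ℕ, n + m₂ ∉ s₁ := by
    intro n hmem
    have := Finset.le_sup (f := id) hmem
    simp only [id] at this
    omega
  -- co-lacunarity for the two pieces
  have hA₁ : a₁ ≤ C * ‖S₁‖ := hCo l₁ s₁
  have hA₂ : a₂ ≤ C * ‖S₂‖ := by
    have h := hCo (fun k => l₂ (k - m₂)) (s₂.image (· + m₂))
    rw [Finset.sum_image inj, Finset.sum_image inj] at h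
    simpa [Nat.add_sub_cancel] using h
  -- lower bounds on |Λᵢ|
  have hS₁le : ‖S₁‖ ≤ ‖T₁‖ + ‖Λ₁‖ * ‖y‖ := by
    calc ‖S₁‖ = ‖T₁ + Λ₁ • y‖ := by rw [hT₁S, sub_add_cancel]
    _ ≤ ‖T₁‖ + ‖Λ₁ • y‖ := norm_add_le _ _
    _ = ‖T₁‖ + ‖Λ₁‖ * ‖y‖ := by rw [norm_smul]
  have hS₂le : ‖S₂‖ ≤ ‖T₂‖ + ‖Λ₂‖ * ‖y‖ := by
    calc ‖S₂‖ = ‖T₂ + Λ₂ • y‖ := by rw [hT₂S, sub_add_cancel]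
    _ ≤ ‖T₂‖ + ‖Λ₂ • y‖ := norm_add_le _ _
    _ = ‖T₂‖ + ‖Λ₂‖ * ‖y‖ := by rw [norm_smul]
  have hΛ₁pos : 0 < ‖Λ₁‖ := by
    by_contra hh
    push_neg at hh
    have h0 : ‖Λ₁‖ = 0 := le_antisymm hh (norm_nonneg _)
    rw [h0] at hS₁le
    have := mul_le_mul_of_nonneg_left hS₁le hC.le
    linarith
  have hΛ₂pos : 0 < ‖Λ₂‖ := by
    by_contra hh
    push_neg at hh
    have h0 : ‖Λ₂‖ = 0 := le_antisymm hh (norm_nonneg _)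
    rw [h0] at hS₂le
    have := mul_le_mul_of_nonneg_left hS₂le hC.le
    linarith
  -- the combined coefficient sequence
  set L : ℕ → ℂ := fun k => if k ∈ s₁ then Λ₂ * l₁ k else -Λ₁ * l₂ (k - m₂) with hLdef
  set u : Finset ℕ := s₁ ∪ s₂.image (· + m₂) with hudef
  have hdisj : Disjoint s₁ (s₂.image (· + m₂)) := by
    rw [Finset.disjoint_right]
    intro a ha
    simp only [Finset.mem_image] at ha
    obtain ⟨n, hn, rfl⟩ := ha
    exact hnotin n
  have hsum : ∑ k ∈ u, L k • x k = Λ₂ • S₁ - Λ₁ • S₂ := by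
    rw [hudef, Finset.sum_union hdisj]
    have h1 : ∑ k ∈ s₁, L k • x k = Λ₂ • S₁ := by
      rw [hS₁def, Finset.smul_sum]
      refine Finset.sum_congr rfl fun k hk => ?_
      rw [hLdef]; simp only [if_pos hk, mul_smul]
    have h2 : ∑ k ∈ s₂.image (· + m₂), L k • x k = -(Λ₁ • S₂) := by
      rw [Finset.sum_image inj]
      have hterm : ∀ n ∈ s₂, L (n + m₂) • x (n + m₂) = -(Λ₁ • (l₂ n • x (n + m₂))) := by
        intro n hn
        rw [hLdef]
        simp only [if_neg (hnotin n), Nat.add_sub_cancel, neg_mul, neg_smul, mul_smul]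
      rw [Finset.sum_congr rfl hterm, Finset.sum_neg_distrib, hS₂def, Finset.smul_sum]
    rw [h1, h2, sub_eq_add_neg]
  have hsq : ∑ k ∈ u, ‖L k‖ ^ 2 = ‖Λ₂‖ ^ 2 * P₁ + ‖Λ₁‖ ^ 2 * P₂ := by
    rw [hudef, Finset.sum_union hdisj]
    have h1 : ∑ k ∈ s₁, ‖L k‖ ^ 2 = ‖Λ₂‖ ^ 2 * P₁ := by
      rw [hP₁def, Finset.mul_sum]
      refine Finset.sum_congr rfl fun k hk => ?_
      rw [hLdef]; simp only [if_pos hk, norm_mul]; ring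
    have h2 : ∑ k ∈ s₂.image (· + m₂), ‖L k‖ ^ 2 = ‖Λ₁‖ ^ 2 * P₂ := by
      rw [Finset.sum_image inj, hP₂def, Finset.mul_sum]
      refine Finset.sum_congr rfl fun n hn => ?_
      rw [hLdef]
      simp only [if_neg (hnotin n), Nat.add_sub_cancel, norm_mul, norm_neg]
      ring
    rw [h1, h2]
  -- kill the y-term
  have hcross : Λ₂ • S₁ - Λ₁ • S₂ = Λ₂ • T₁ - Λ₁ • T₂ := by
    rw [hT₁S, hT₂S]
    rw [smul_sub, smul_sub, smul_smul, smul_smul, mul_comm Λ₂ Λ₁]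
    abel
  set Q := ‖Λ₂‖ ^ 2 * P₁ + ‖Λ₁‖ ^ 2 * P₂ with hQdef
  have hmain : Real.sqrt Q ≤ C * ‖Λ₂ • T₁ - Λ₁ • T₂‖ := by
    have h := hCo L u
    rw [hsq, hsum, hcross] at h
    exact h
  have hnormsplit : ‖Λ₂ • T₁ - Λ₁ • T₂‖ ≤ ‖Λ₂‖ * ‖T₁‖ + ‖Λ₁‖ * ‖T₂‖ := by
    calc ‖Λ₂ • T₁ - Λ₁ • T₂‖ ≤ ‖Λ₂ • T₁‖ + ‖Λ₁ • T₂‖ := norm_sub_le _ _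
    _ = ‖Λ₂‖ * ‖T₁‖ + ‖Λ₁‖ * ‖T₂‖ := by rw [norm_smul, norm_smul]
  have hb₁ : ‖Λ₂‖ * a₁ ≤ Real.sqrt Q := by
    rw [show ‖Λ₂‖ * a₁ = Real.sqrt (‖Λ₂‖ ^ 2 * P₁) by
      rw [Real.sqrt_mul (pow_nonneg (norm_nonneg _) 2), Real.sqrt_sq (norm_nonneg _)]]
    exact Real.sqrt_le_sqrt (le_add_of_nonneg_right (mul_nonneg (pow_nonneg (norm_nonneg _) 2) hP₂))
  have hb₂ : ‖Λ₁‖ * a₂ ≤ Real.sqrt Q := by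
    rw [show ‖Λ₁‖ * a₂ = Real.sqrt (‖Λ₁‖ ^ 2 * P₂) by
      rw [Real.sqrt_mul (pow_nonneg (norm_nonneg _) 2), Real.sqrt_sq (norm_nonneg _)]]
    exact Real.sqrt_le_sqrt (le_add_of_nonneg_left (mul_nonneg (pow_nonneg (norm_nonneg _) 2) hP₁))
  have hp₁ : ‖Λ₂‖ * (2 * C * ‖T₁‖) < ‖Λ₂‖ * a₁ :=
    mul_lt_mul_of_pos_left hw₁ hΛ₂pos
  have hp₂ : ‖Λ₁‖ * (2 * C * ‖T₂‖) < ‖Λ₁‖ * a₂ :=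
    mul_lt_mul_of_pos_left hw₂ hΛ₁pos
  have hfin := mul_le_mul_of_nonneg_left hnormsplit hC.le
  linarith only [hmain, hfin, hp₁, hp₂, hb₁, hb₂]
end

section
/- Let X be a normed space, let (x_n)_{n≥1} be a bounded 2-co-lacunary sequence in X, and let (y_n)_{n≥1} ⊂ X be such that the series Σ_{n≥1} ‖x_n − y_n‖_X converges. Then there exists m ∈ ℕ such that the sequence (y_n)_{n≥m} is 2-co-lacunary. -/
/-!
Perturbing a 2-co-lacunary sequence with constant `C` by vectors of total size `δ < 1 / C`
costs at most `‖λ‖₂ δ` in `‖∑ λₙ xₙ‖`, because every `|λₙ|` is bounded by `‖λ‖₂`; hence the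
perturbed sequence is 2-co-lacunary with constant `C / (1 - C δ)`. Since `∑ ‖xₙ - yₙ‖`
converges, its tails become smaller than `1 / C`, and tails of a 2-co-lacunary sequence are
2-co-lacunary with the same constant.
-/

open Filter Topology

def IsTwoColacunaryWith {X : Type*} [NormedAddCommGroup X] [NormedSpace ℂ X] (C : ℝ)
    (x : ℕ → X) : Prop :=
  ∀ (l : ℕ → ℂ) (s : Finset ℕ), Real.sqrt (∑ n ∈ s, ‖l n‖ ^ 2) ≤ C * ‖∑ n ∈ s, l n • x n‖

theorem norm_le_sqrt_sum_norm_sq {ι E : Type*} [SeminormedAddCommGroup E] {s : Finset ι}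
    {i : ι} (l : ι → E) (hi : i ∈ s) : ‖l i‖ ≤ Real.sqrt (∑ j ∈ s, ‖l j‖ ^ 2) :=
  Real.le_sqrt_of_sq_le <|
    Finset.single_le_sum (f := fun j => ‖l j‖ ^ 2) (fun _ _ => sq_nonneg _) hi

theorem norm_sum_smul_sub_sum_smul_le {ι 𝕜 X : Type*} [NormedField 𝕜]
    [SeminormedAddCommGroup X] [NormedSpace 𝕜 X] (s : Finset ι) (l : ι → 𝕜) (x y : ι → X) :
    ‖∑ i ∈ s, l i • x i - ∑ i ∈ s, l i • y i‖
      ≤ Real.sqrt (∑ i ∈ s, ‖l i‖ ^ 2) * ∑ i ∈ s, ‖x i - y i‖ := by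
  rw [← Finset.sum_sub_distrib, Finset.mul_sum]
  refine (norm_sum_le _ _).trans (Finset.sum_le_sum fun i hi => ?_)
  rw [← smul_sub, norm_smul]
  exact mul_le_mul_of_nonneg_right (norm_le_sqrt_sum_norm_sq l hi) (norm_nonneg _)

namespace IsTwoColacunaryWith

variable {X : Type*} [NormedAddCommGroup X] [NormedSpace ℂ X] {C : ℝ} {x y : ℕ → X}

theorem comp_injective (hx : IsTwoColacunaryWith C x) {f : ℕ → ℕ}
    (hf : Function.Injective f) : IsTwoColacunaryWith C (fun n => x (f n)) := by
  intro l s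
  have h := hx (Function.extend f l 0) (s.image f)
  rw [Finset.sum_image hf.injOn, Finset.sum_image hf.injOn] at h
  simpa only [hf.extend_apply] using h

theorem of_tsum_norm_sub_lt (hx : IsTwoColacunaryWith C x) (hC : 0 ≤ C)
    (hsum : Summable fun n => ‖x n - y n‖) (hsmall : C * ∑' n, ‖x n - y n‖ < 1) :
    IsTwoColacunaryWith (C / (1 - C * ∑' n, ‖x n - y n‖)) y := by
  set δ := ∑' n, ‖x n - y n‖
  intro l s
  set R := Real.sqrt (∑ n ∈ s, ‖l n‖ ^ 2)
  have hR : 0 ≤ R := Real.sqrt_nonneg _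
  have hdiff : ‖∑ n ∈ s, l n • x n - ∑ n ∈ s, l n • y n‖ ≤ R * δ :=
    (norm_sum_smul_sub_sum_smul_le s l x y).trans <| mul_le_mul_of_nonneg_left
      (hsum.sum_le_tsum s fun _ _ => norm_nonneg _) hR
  have hx' : R ≤ C * (‖∑ n ∈ s, l n • y n‖ + R * δ) :=
    (hx l s).trans <| mul_le_mul_of_nonneg_left
      ((norm_le_norm_add_norm_sub' _ _).trans (by gcongr)) hC
  rw [div_mul_eq_mul_div, le_div_iff₀ (by linarith)]
  linarith

end IsTwoColacunaryWith

theorem twoColacunary_perturbation_tail_general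
    {X : Type*} [NormedAddCommGroup X] [NormedSpace ℂ X]
    (x y : ℕ → X) (hx : IsTwoColacunary x)
    (hsum : Summable (fun n => ‖x n - y n‖)) :
    ∃ m : ℕ, IsTwoColacunary (fun n => y (n + m)) := by
  obtain ⟨C, hC, hCx⟩ := hx
  have htail : Tendsto (fun m => C * ∑' n, ‖x (n + m) - y (n + m)‖) atTop (𝓝 0) := by
    simpa using (tendsto_sum_nat_add fun n => ‖x n - y n‖).const_mul C
  obtain ⟨m, hm⟩ := (htail.eventually_lt_const one_pos).exists
  have hxm : IsTwoColacunaryWith C (fun n => x (n + m)) :=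
    IsTwoColacunaryWith.comp_injective hCx (add_left_injective m)
  exact ⟨m, _, div_pos hC (by linarith), hxm.of_tsum_norm_sub_lt hC.le
    ((summable_nat_add_iff m).2 hsum) hm⟩

/-- Perturbation lemma, part (ii): if a bounded sequence `(xₙ)` is 2-co-lacunary and
`∑ ‖xₙ - yₙ‖` converges, then some tail `(y_{n+m})ₙ` is 2-co-lacunary. -/
theorem twoColacunary_perturbation_tail
    {X : Type*} [NormedAddCommGroup X] [NormedSpace ℂ X]
    (x y : ℕ → X) (hbdd : ∃ M : ℝ, ∀ n, ‖x n‖ ≤ M) (hx : IsTwoColacunary x)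
    (hsum : Summable (fun n => ‖x n - y n‖)) :
    ∃ m : ℕ, IsTwoColacunary (fun n => y (n + m)) :=
  twoColacunary_perturbation_tail_general x y hx hsum
end

section
/- Let (Ω, μ) be a measure space, let 0 < p ≤ 2, and let f_1, …, f_n be measurable functions on Ω with ∫ |f_k|^p dμ < ∞ for each k. Then ( Σ_{k=1}^n ( ∫ |f_k|^p dμ )^{2/p} )^{1/2} ≤ ( ∫ ( Σ_{k=1}^n |f_k|² )^{p/2} dμ )^{1/p}. In other words, L_p(μ) is 2-concave with constant 1 for 0 < p ≤ 2: (Σ_k ‖f_k‖_p²)^{1/2} ≤ ‖(Σ_k |f_k|²)^{1/2}‖_p. -/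
/-!
With `q = p / 2 ≤ 1` and `gₖ = |fₖ|²` the inequality reads `∑ₖ ‖gₖ‖_q ≤ ‖∑ₖ gₖ‖_q`:
Minkowski's inequality is reversed for exponents `0 < q ≤ 1`. For two functions `f, g` with
`A = ‖f‖_q`, `B = ‖g‖_q`, put `a = A / (A + B)`, `b = B / (A + B)`. Concavity of `t ↦ t ^ q`
gives pointwise `a (f / a) ^ q + b (g / b) ^ q ≤ (f + g) ^ q`, and the left side integrates to
exactly `(A + B) ^ q`.
-/

open MeasureTheory ENNReal

namespace ENNReal

variable {q : ℝ}

theorem mul_div_rpow_add_mul_div_rpow_le_add_rpow (hq0 : 0 < q) (hq1 : q ≤ 1) {a b : ℝ≥0∞}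
    (ha0 : a ≠ 0) (ha : a ≠ ∞) (hb0 : b ≠ 0) (hb : b ≠ ∞) (hab : a + b = 1) (x y : ℝ≥0∞) :
    a * (x / a) ^ q + b * (y / b) ^ q ≤ (x + y) ^ q := by
  have hpow_inv (z : ℝ≥0∞) : (z ^ q) ^ (1 / q) = z := by
    rw [← rpow_mul, mul_one_div_cancel hq0.ne', rpow_one]
  have hmean := rpow_arith_mean_le_arith_mean2_rpow a b ((x / a) ^ q) ((y / b) ^ q) hab
    (one_le_one_div hq0 hq1)
  rwa [hpow_inv, hpow_inv, ENNReal.mul_div_cancel ha0 ha, ENNReal.mul_div_cancel hb0 hb, one_div,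
    rpow_inv_le_iff hq0] at hmean

variable {Ω : Type*} [MeasurableSpace Ω] (μ : Measure Ω)

theorem lintegral_div_const_rpow (hq : 0 < q) {c : ℝ≥0∞} (hc : c ≠ 0) (f : Ω → ℝ≥0∞) :
    ∫⁻ ω, (f ω / c) ^ q ∂μ = ((∫⁻ ω, f ω ^ q ∂μ) ^ (1 / q) / c) ^ q := by
  simp_rw [div_rpow_of_nonneg _ _ hq.le, ← rpow_mul, one_div_mul_cancel hq.ne', rpow_one,
    div_eq_mul_inv]
  exact lintegral_mul_const' _ _ (inv_ne_top.mpr (by simp [rpow_eq_zero_iff, hc, hq.not_gt]))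

theorem lintegral_Lp_mono (hq : 0 ≤ q) {f g : Ω → ℝ≥0∞} (hfg : f ≤ g) :
    (∫⁻ ω, f ω ^ q ∂μ) ^ (1 / q) ≤ (∫⁻ ω, g ω ^ q ∂μ) ^ (1 / q) :=
  rpow_le_rpow (lintegral_mono fun ω => rpow_le_rpow (hfg ω) hq) (by positivity)

theorem rpow_add_le_lintegral_add_rpow (hq0 : 0 < q) (hq1 : q ≤ 1) {f g : Ω → ℝ≥0∞}
    {A B : ℝ≥0∞} (hA_def : A = (∫⁻ ω, f ω ^ q ∂μ) ^ (1 / q))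
    (hB_def : B = (∫⁻ ω, g ω ^ q ∂μ) ^ (1 / q)) (hA0 : A ≠ 0) (hA : A ≠ ∞) (hB0 : B ≠ 0)
    (hB : B ≠ ∞) :
    (A + B) ^ q ≤ ∫⁻ ω, (f ω + g ω) ^ q ∂μ := by
  set S := A + B
  have hS0 : S ≠ 0 := by simp [S, hA0]
  have hS : S ≠ ∞ := add_ne_top.mpr ⟨hA, hB⟩
  have hab : A / S + B / S = 1 := by rw [ENNReal.div_add_div_same, ENNReal.div_self hS0 hS]
  have hscaled {h : Ω → ℝ≥0∞} {C : ℝ≥0∞} (hC_def : C = (∫⁻ ω, h ω ^ q ∂μ) ^ (1 / q))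
      (hC0 : C ≠ 0) (hC : C ≠ ∞) : ∫⁻ ω, (h ω / (C / S)) ^ q ∂μ = S ^ q := by
    rw [lintegral_div_const_rpow μ hq0 (by simp [hC0, hS]), ← hC_def,
      ENNReal.div_div_cancel hC0 hC]
  calc S ^ q = A / S * S ^ q + B / S * S ^ q := by rw [← add_mul, hab, one_mul]
    _ = ∫⁻ ω, A / S * (f ω / (A / S)) ^ q ∂μ + ∫⁻ ω, B / S * (g ω / (B / S)) ^ q ∂μ := by
      rw [lintegral_const_mul' _ _ (div_ne_top hA hS0),
        lintegral_const_mul' _ _ (div_ne_top hB hS0), hscaled hA_def hA0 hA, hscaled hB_def hB0 hB]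
    _ ≤ ∫⁻ ω, (A / S * (f ω / (A / S)) ^ q + B / S * (g ω / (B / S)) ^ q) ∂μ :=
      le_lintegral_add _ _
    _ ≤ ∫⁻ ω, (f ω + g ω) ^ q ∂μ := lintegral_mono fun ω =>
      mul_div_rpow_add_mul_div_rpow_le_add_rpow hq0 hq1 (by simp [hA0, hS])
        (div_ne_top hA hS0) (by simp [hB0, hS]) (div_ne_top hB hS0) hab _ _

theorem lintegral_Lp_add_lintegral_Lp_le_of_le_one (hq0 : 0 < q) (hq1 : q ≤ 1)
    (f g : Ω → ℝ≥0∞) :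
    (∫⁻ ω, f ω ^ q ∂μ) ^ (1 / q) + (∫⁻ ω, g ω ^ q ∂μ) ^ (1 / q)
      ≤ (∫⁻ ω, (f ω + g ω) ^ q ∂μ) ^ (1 / q) := by
  set A := (∫⁻ ω, f ω ^ q ∂μ) ^ (1 / q) with hA_def
  set B := (∫⁻ ω, g ω ^ q ∂μ) ^ (1 / q) with hB_def
  have hA_le : A ≤ (∫⁻ ω, (f ω + g ω) ^ q ∂μ) ^ (1 / q) :=
    lintegral_Lp_mono μ hq0.le fun ω => le_self_add
  have hB_le : B ≤ (∫⁻ ω, (f ω + g ω) ^ q ∂μ) ^ (1 / q) :=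
    lintegral_Lp_mono μ hq0.le fun ω => le_add_self
  rcases eq_or_ne A 0 with hA0 | hA0
  · rwa [hA0, zero_add]
  rcases eq_or_ne B 0 with hB0 | hB0
  · rwa [hB0, add_zero]
  rcases eq_or_ne A ∞ with hA | hA
  · rw [hA, top_le_iff] at hA_le
    exact hA_le ▸ le_top
  rcases eq_or_ne B ∞ with hB | hB
  · rw [hB, top_le_iff] at hB_le
    exact hB_le ▸ le_top
  rw [one_div, le_rpow_inv_iff hq0]
  exact rpow_add_le_lintegral_add_rpow μ hq0 hq1 hA_def hB_def hA0 hA hB0 hB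

theorem sum_lintegral_Lp_le_lintegral_Lp_sum_of_le_one (hq0 : 0 < q) (hq1 : q ≤ 1) {ι : Type*}
    (s : Finset ι) (f : ι → Ω → ℝ≥0∞) :
    ∑ i ∈ s, (∫⁻ ω, f i ω ^ q ∂μ) ^ (1 / q) ≤ (∫⁻ ω, (∑ i ∈ s, f i ω) ^ q ∂μ) ^ (1 / q) := by
  induction s using Finset.cons_induction with
  | empty => simp
  | cons i s his ih =>
    simp only [Finset.sum_cons]
    exact (add_le_add le_rfl ih).trans (lintegral_Lp_add_lintegral_Lp_le_of_le_one μ hq0 hq1 _ _)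

end ENNReal

theorem Lp_two_concave_general
    {Ω : Type*} [MeasurableSpace Ω] (μ : Measure Ω)
    (p : ℝ) (hp0 : 0 < p) (hp2 : p ≤ 2)
    (n : ℕ) (f : Fin n → Ω → ℝ) :
    (∑ k, (∫⁻ ω, (‖f k ω‖₊ : ℝ≥0∞) ^ p ∂μ) ^ (2 / p)) ^ ((1 : ℝ) / 2)
      ≤ (∫⁻ ω, (∑ k, (‖f k ω‖₊ : ℝ≥0∞) ^ (2 : ℝ)) ^ (p / 2) ∂μ) ^ (1 / p) := by
  have hsq_rpow (x : ℝ≥0∞) : (x ^ (2 : ℝ)) ^ (p / 2) = x ^ p := by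
    rw [← rpow_mul]; congr 1; ring
  have reverse_minkowski := ENNReal.sum_lintegral_Lp_le_lintegral_Lp_sum_of_le_one μ
    (by positivity : 0 < p / 2) (by linarith) Finset.univ fun k ω => (‖f k ω‖₊ : ℝ≥0∞) ^ (2 : ℝ)
  rw [one_div_div] at reverse_minkowski
  simp only [hsq_rpow] at reverse_minkowski
  calc _ ≤ ((∫⁻ ω, (∑ k, (‖f k ω‖₊ : ℝ≥0∞) ^ (2 : ℝ)) ^ (p / 2) ∂μ) ^ (2 / p)) ^ ((1 : ℝ) / 2) :=
        rpow_le_rpow reverse_minkowski (by norm_num)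
    _ = _ := by rw [← rpow_mul]; congr 1; field_simp

/-- `L_p` is 2-concave with constant 1 for `0 < p ≤ 2`: for measurable functions `f₁, …, fₙ`
with finite `p`-th moments,
`(∑ₖ ‖fₖ‖_p²)^(1/2) ≤ ‖(∑ₖ |fₖ|²)^(1/2)‖_p`. -/
theorem Lp_two_concave
    {Ω : Type*} [MeasurableSpace Ω] (μ : Measure Ω)
    (p : ℝ) (hp0 : 0 < p) (hp2 : p ≤ 2)
    (n : ℕ) (f : Fin n → Ω → ℝ) (hmeas : ∀ k, Measurable (f k))
    (hfin : ∀ k, ∫⁻ ω, (‖f k ω‖₊ : ℝ≥0∞) ^ p ∂μ < ∞) :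
    (∑ k, (∫⁻ ω, (‖f k ω‖₊ : ℝ≥0∞) ^ p ∂μ) ^ (2 / p)) ^ ((1 : ℝ) / 2)
      ≤ (∫⁻ ω, (∑ k, (‖f k ω‖₊ : ℝ≥0∞) ^ (2 : ℝ)) ^ (p / 2) ∂μ) ^ (1 / p) :=
  Lp_two_concave_general μ p hp0 hp2 n f
end

section
/- There is an absolute constant c > 0 with the following property. Let (Ω, 𝓕, P) be a probability space with a filtration (𝓕_k)_{k≥0}, and let (d_k)_{k≥1} be a martingale difference sequence in L¹(Ω, P), i.e. each d_k is 𝓕_k-measurable and integrable with E[d_k | 𝓕_{k−1}] = 0 for k ≥ 2. Then for every choice of signs ε_k ∈ {−1, +1}, every n ≥ 1 and every t > 0, t · P( |Σ_{k=1}^n ε_k d_k| > t ) ≤ c · sup_{m≥1} ‖ Σ_{k=1}^m d_k ‖_{L¹}. (Weak type (1,1) inequality for martingale transforms by signs.) -/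
open MeasureTheory Finset

universe u

/-!
Burkholder's function `U(x, y) = y² - x²` for `|x| + |y| ≤ 1` and `U(x, y) = 1 - 2|x|` otherwise
majorizes `1{|y| > 1} - 2|x|`, is nonpositive where `|y| ≤ |x|`, and satisfies the one-sided
concavity estimate `U(x + h, y ± h) ≤ U(x, y) + h φ(x, y)` along lines of slope `±1`. For the
martingale `F_n = ∑ d_k` and its transform `G_n = ∑ ε_k d_k`, the increment `h = d_{n+1}` is
orthogonal to the predictable `φ(F_n / t, G_n / t)`, so `E U(F_n / t, G_n / t) ≤ 0` by induction,
whence `t P(|G_n| > t) ≤ 2 E|F_n|`, i.e. `c = 2`.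
-/

noncomputable def burkholderU (x y : ℝ) : ℝ :=
  if |x| + |y| ≤ 1 then y ^ 2 - x ^ 2 else 1 - 2 * |x|

noncomputable def burkholderGrad (e x y : ℝ) : ℝ :=
  if |x| + |y| ≤ 1 then 2 * (e * y - x) else if 0 ≤ x then -2 else 2

lemma measurable_burkholderU : Measurable fun p : ℝ × ℝ => burkholderU p.1 p.2 :=
  Measurable.ite (measurableSet_le (by fun_prop) measurable_const) (by fun_prop) (by fun_prop)

lemma measurable_burkholderGrad (e : ℝ) : Measurable fun p : ℝ × ℝ => burkholderGrad e p.1 p.2 :=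
  Measurable.ite (measurableSet_le (by fun_prop) measurable_const) (by fun_prop) <|
    Measurable.ite (measurableSet_le measurable_const measurable_fst) measurable_const
      measurable_const

lemma abs_burkholderU_le (x y : ℝ) : |burkholderU x y| ≤ 1 + 2 * |x| := by
  unfold burkholderU
  rw [abs_le]
  split_ifs <;> constructor <;> nlinarith [abs_nonneg x, abs_nonneg y, sq_abs x, sq_abs y]

lemma abs_burkholderGrad_le {e : ℝ} (he : |e| ≤ 1) (x y : ℝ) : |burkholderGrad e x y| ≤ 2 := by
  unfold burkholderGrad
  split_ifs with hin
  · have : |e * y - x| ≤ 1 := calc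
      |e * y - x| ≤ |e| * |y| + |x| := (abs_sub _ _).trans_eq (by rw [abs_mul])
      _ ≤ 1 := by nlinarith [abs_nonneg y]
    rw [abs_mul, abs_two]
    linarith
  all_goals norm_num

lemma burkholderU_nonpos_of_abs_le {x y : ℝ} (h : |y| ≤ |x|) : burkholderU x y ≤ 0 := by
  unfold burkholderU
  split_ifs
  · exact sub_nonpos.2 (sq_le_sq.2 h)
  · linarith

lemma indicator_sub_le_burkholderU (x y : ℝ) :
    {z : ℝ | 1 < |z|}.indicator 1 y - 2 * |x| ≤ burkholderU x y := by
  simp only [Set.indicator_apply, Set.mem_ofPred_eq, Pi.one_apply, burkholderU]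
  split_ifs <;> nlinarith [abs_nonneg x, abs_nonneg y, sq_abs x, sq_abs y]

lemma burkholderU_le_one_sub_two_mul_abs (x y : ℝ) : burkholderU x y ≤ 1 - 2 * |x| := by
  unfold burkholderU
  split_ifs
  · nlinarith [abs_nonneg x, abs_nonneg y, sq_abs x, sq_abs y]
  · rfl

lemma burkholderU_le_sq_sub_sq {x y : ℝ} (h : |x| ≤ |y| + 1) : burkholderU x y ≤ y ^ 2 - x ^ 2 := by
  unfold burkholderU
  split_ifs
  · rfl
  · nlinarith [abs_nonneg x, abs_nonneg y, sq_abs x, sq_abs y]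

/- Inside the square the right-hand side is the quadratic `(y + e h)² - (x + h)²`, which dominates
`U` on the band `|x| ≤ |y| + 1`; outside, it is a tangent line of `1 - 2|x|`, which dominates `U`
everywhere. -/
lemma burkholderU_add_le {e : ℝ} (he : |e| = 1) (x y h : ℝ) :
    burkholderU (x + h) (y + e * h) ≤ burkholderU x y + h * burkholderGrad e x y := by
  have he_sq : e ^ 2 = 1 := by rw [← sq_abs, he, one_pow]
  by_cases hin : |x| + |y| ≤ 1
  · have hdiag : |x + h| ≤ |y + e * h| + 1 := calc
      |x + h| ≤ |x + h - e * (y + e * h)| + |e * (y + e * h)| := by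
        linarith [abs_sub_abs_le_abs_sub (x + h) (e * (y + e * h))]
      _ = |x - e * y| + |y + e * h| := by
        rw [abs_mul, he, one_mul]
        congr 2
        linear_combination (-h) * he_sq
      _ ≤ |x| + |y| + |y + e * h| := by grw [abs_sub, abs_mul, he, one_mul]
      _ ≤ |y + e * h| + 1 := by linarith
    calc burkholderU (x + h) (y + e * h) ≤ (y + e * h) ^ 2 - (x + h) ^ 2 :=
          burkholderU_le_sq_sub_sq hdiag
      _ = burkholderU x y + h * burkholderGrad e x y := by
        simp only [burkholderU, burkholderGrad, if_pos hin]
        linear_combination h ^ 2 * he_sq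
  · calc burkholderU (x + h) (y + e * h) ≤ 1 - 2 * |x + h| :=
          burkholderU_le_one_sub_two_mul_abs _ _
      _ ≤ burkholderU x y + h * burkholderGrad e x y := by
        simp only [burkholderU, burkholderGrad, if_neg hin]
        split_ifs with hx
        · rw [abs_of_nonneg hx]; linarith [le_abs_self (x + h)]
        · rw [abs_of_neg (not_le.1 hx)]; linarith [neg_abs_le (x + h)]

lemma integral_mul_eq_zero_of_condExp_eq_zero {Ω : Type*} {m m0 : MeasurableSpace Ω}
    {P : Measure Ω} (hm : m ≤ m0) [SigmaFinite (P.trim hm)] {φ f : Ω → ℝ}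
    (hφ : StronglyMeasurable[m] φ) (hφf : Integrable (φ * f) P) (hf : Integrable f P)
    (hcond : P[f|m] =ᵐ[P] 0) :
    ∫ ω, φ ω * f ω ∂P = 0 := calc
  ∫ ω, φ ω * f ω ∂P = ∫ ω, P[φ * f|m] ω ∂P := (integral_condExp hm).symm
  _ = ∫ _, 0 ∂P := integral_congr_ae <| by
    filter_upwards [condExp_mul_of_stronglyMeasurable_left hφ hφf hf, hcond] with ω h1 h2
    simp [h1, h2]
  _ = 0 := integral_zero _ _

lemma integrable_burkholderU_comp {Ω : Type*} {m0 : MeasurableSpace Ω} {P : Measure Ω}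
    [IsFiniteMeasure P] {f g : Ω → ℝ} (hf : Integrable f P) (hg : AEMeasurable g P) :
    Integrable (fun ω => burkholderU (f ω) (g ω)) P :=
  ((integrable_const 1).add (hf.abs.const_mul 2)).mono'
    (measurable_burkholderU.comp_aemeasurable (hf.aemeasurable.prodMk hg)).aestronglyMeasurable
    (ae_of_all _ fun ω => abs_burkholderU_le (f ω) (g ω))

section MartingaleTransform

variable {Ω : Type*} {m0 : MeasurableSpace Ω} {P : Measure Ω} (ℱ : Filtration ℕ m0) {d : ℕ → Ω → ℝ}

lemma stronglyMeasurable_sum_Icc (hd : ∀ k, 1 ≤ k → StronglyMeasurable[ℱ k] (d k)) (n : ℕ) :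
    StronglyMeasurable[ℱ n] fun ω => ∑ k ∈ Icc 1 n, d k ω :=
  Finset.stronglyMeasurable_fun_sum _ fun k hk =>
    (hd k (mem_Icc.1 hk).1).mono (ℱ.mono (mem_Icc.1 hk).2)

lemma integrable_sum_Icc (hd : ∀ k, 1 ≤ k → Integrable (d k) P) (n : ℕ) :
    Integrable (fun ω => ∑ k ∈ Icc 1 n, d k ω) P :=
  integrable_finsetSum _ fun k hk => hd k (mem_Icc.1 hk).1

lemma integral_burkholderU_sum_nonpos [IsFiniteMeasure P]
    (hd_meas : ∀ k, 1 ≤ k → StronglyMeasurable[ℱ k] (d k))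
    (hd_int : ∀ k, 1 ≤ k → Integrable (d k) P) (hd_cond : ∀ k, 2 ≤ k → P[d k|ℱ (k - 1)] =ᵐ[P] 0)
    {ε : ℕ → ℝ} (hε : ∀ k, |ε k| = 1) (t : ℝ) {n : ℕ} (hn : 1 ≤ n) :
    ∫ ω, burkholderU ((∑ k ∈ Icc 1 n, d k ω) / t) ((∑ k ∈ Icc 1 n, ε k * d k ω) / t) ∂P ≤ 0 := by
  have hG_meas := stronglyMeasurable_sum_Icc ℱ (d := fun k ω => ε k * d k ω)
    fun k hk => (hd_meas k hk).const_mul (ε k)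
  have hG_int := integrable_sum_Icc (d := fun k ω => ε k * d k ω)
    fun k hk => (hd_int k hk).const_mul (ε k)
  have hU_int : ∀ n, Integrable (fun ω => burkholderU
      ((∑ k ∈ Icc 1 n, d k ω) / t) ((∑ k ∈ Icc 1 n, ε k * d k ω) / t)) P := fun n =>
    integrable_burkholderU_comp ((integrable_sum_Icc hd_int n).div_const t)
      ((hG_int n).div_const t).aemeasurable
  induction n, hn using Nat.le_induction with
  | base =>
    refine integral_nonpos fun ω => burkholderU_nonpos_of_abs_le ?_
    simp [mul_div_assoc, abs_mul, hε 1]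
  | succ m hm ih =>
    set F := fun ω => ∑ k ∈ Icc 1 m, d k ω
    set G := fun ω => ∑ k ∈ Icc 1 m, ε k * d k ω
    set Φ := fun ω => burkholderGrad (ε (m + 1)) (F ω / t) (G ω / t) / t
    have hΦ_meas : StronglyMeasurable[ℱ m] Φ :=
      (((measurable_burkholderGrad _).comp
        (((stronglyMeasurable_sum_Icc ℱ hd_meas m).measurable.div_const t).prodMk
          ((hG_meas m).measurable.div_const t))).div_const t).stronglyMeasurable
    have hΦd_int : Integrable (Φ * d (m + 1)) P :=
      (hd_int (m + 1) (by omega)).bdd_mul (hΦ_meas.mono (ℱ.le m)).aestronglyMeasurable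
        (ae_of_all _ fun ω => by
          rw [Real.norm_eq_abs, abs_div]
          exact div_le_div_of_nonneg_right (abs_burkholderGrad_le (hε _).le _ _) (abs_nonneg t))
    have horth : ∫ ω, Φ ω * d (m + 1) ω ∂P = 0 :=
      integral_mul_eq_zero_of_condExp_eq_zero (ℱ.le m) hΦ_meas hΦd_int (hd_int (m + 1) (by omega))
        (by simpa using hd_cond (m + 1) (by omega))
    have hstep : ∀ ω, burkholderU ((∑ k ∈ Icc 1 (m + 1), d k ω) / t)
        ((∑ k ∈ Icc 1 (m + 1), ε k * d k ω) / t) ≤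
          burkholderU (F ω / t) (G ω / t) + Φ ω * d (m + 1) ω := fun ω => by
      rw [sum_Icc_succ_top (by omega), sum_Icc_succ_top (by omega), add_div, add_div,
        mul_div_assoc]
      calc _ ≤ _ := burkholderU_add_le (hε (m + 1)) _ _ _
        _ = _ := by ring
    calc _ ≤ ∫ ω, (burkholderU (F ω / t) (G ω / t) + Φ ω * d (m + 1) ω) ∂P :=
          integral_mono (hU_int _) ((hU_int m).add hΦd_int) hstep
      _ = ∫ ω, burkholderU (F ω / t) (G ω / t) ∂P + ∫ ω, Φ ω * d (m + 1) ω ∂P :=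
          integral_add (hU_int m) hΦd_int
      _ ≤ 0 := by linarith

lemma mul_measureReal_lt_abs_sum_le [IsFiniteMeasure P]
    (hd_meas : ∀ k, 1 ≤ k → StronglyMeasurable[ℱ k] (d k))
    (hd_int : ∀ k, 1 ≤ k → Integrable (d k) P) (hd_cond : ∀ k, 2 ≤ k → P[d k|ℱ (k - 1)] =ᵐ[P] 0)
    {ε : ℕ → ℝ} (hε : ∀ k, |ε k| = 1) {t : ℝ} (ht : 0 < t) {n : ℕ} (hn : 1 ≤ n) :
    t * P.real {ω | t < |∑ k ∈ Icc 1 n, ε k * d k ω|} ≤ 2 * ∫ ω, |∑ k ∈ Icc 1 n, d k ω| ∂P := by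
  set F := fun ω => ∑ k ∈ Icc 1 n, d k ω
  set G := fun ω => ∑ k ∈ Icc 1 n, ε k * d k ω
  set S := {ω | t < |G ω|}
  have hF_int : Integrable F P := integrable_sum_Icc hd_int n
  have hS : MeasurableSet S := measurableSet_lt measurable_const
    ((stronglyMeasurable_sum_Icc ℱ (d := fun k ω => ε k * d k ω)
      (fun k hk => (hd_meas k hk).const_mul (ε k)) n).measurable.mono (ℱ.le n) le_rfl).abs
  have hmaj : ∀ ω, t * S.indicator 1 ω - 2 * |F ω| ≤ t * burkholderU (F ω / t) (G ω / t) :=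
    fun ω => calc
      t * S.indicator 1 ω - 2 * |F ω|
          = t * ({z : ℝ | 1 < |z|}.indicator 1 (G ω / t) - 2 * |F ω / t|) := by
        simp only [Set.indicator_apply, S, Set.mem_ofPred_eq, Pi.one_apply, abs_div,
          abs_of_pos ht, one_lt_div ht]
        field_simp
      _ ≤ t * burkholderU (F ω / t) (G ω / t) :=
        mul_le_mul_of_nonneg_left (indicator_sub_le_burkholderU _ _) ht.le
  have hind_int : Integrable (fun ω => t * S.indicator 1 ω) P :=
    ((integrable_const 1).indicator hS).const_mul t
  have hint : ∫ ω, (t * S.indicator 1 ω - 2 * |F ω|) ∂P ≤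
      ∫ ω, t * burkholderU (F ω / t) (G ω / t) ∂P :=
    integral_mono (hind_int.sub (hF_int.abs.const_mul 2))
      ((integrable_burkholderU_comp (hF_int.div_const t)
        ((integrable_sum_Icc (fun k hk => (hd_int k hk).const_mul (ε k)) n).div_const
          t).aemeasurable).const_mul t) hmaj
  rw [integral_sub hind_int (hF_int.abs.const_mul 2), integral_const_mul, integral_const_mul,
    integral_const_mul, integral_indicator_one hS] at hint
  linarith [mul_nonpos_of_nonneg_of_nonpos ht.le
    (integral_burkholderU_sum_nonpos ℱ hd_meas hd_int hd_cond hε t hn)]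

end MartingaleTransform

/-- Weak type (1,1) inequality for martingale transforms by signs: there is an absolute
constant `c > 0` such that for every martingale difference sequence `(d_k)_{k≥1}` in `L¹`
of a probability space, every choice of signs `ε_k ∈ {−1, +1}`, every `n ≥ 1` and `t > 0`,
`t · P(|∑_{k=1}^n ε_k d_k| > t) ≤ c · sup_{m≥1} ‖∑_{k=1}^m d_k‖_{L¹}`. -/
theorem weak_type_one_one_martingale_sign_transform :
    ∃ c : ℝ, 0 < c ∧
      ∀ (Ω : Type u) [m0 : MeasurableSpace Ω] (P : Measure Ω), IsProbabilityMeasure P →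
        ∀ (ℱ : ℕ → MeasurableSpace Ω), (∀ k, ℱ k ≤ m0) → Monotone ℱ →
          ∀ d : ℕ → Ω → ℝ,
            (∀ k, 1 ≤ k → StronglyMeasurable[ℱ k] (d k)) →
            (∀ k, 1 ≤ k → Integrable (d k) P) →
            (∀ k, 2 ≤ k → P[d k|ℱ (k - 1)] =ᵐ[P] 0) →
            ∀ ε : ℕ → ℝ, (∀ k, ε k = 1 ∨ ε k = -1) →
              ∀ n, 1 ≤ n → ∀ t : ℝ, 0 < t →
                ENNReal.ofReal t * P {ω | t < |∑ k ∈ Finset.Icc 1 n, ε k * d k ω|}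
                  ≤ ENNReal.ofReal c *
                      ⨆ m : ℕ, ENNReal.ofReal (∫ ω, |∑ k ∈ Finset.Icc 1 (m + 1), d k ω| ∂P) := by
  refine ⟨2, two_pos, fun Ω _ P _ ℱ hle hmono d hd_meas hd_int hd_cond ε hε n hn t ht => ?_⟩
  have hweak := mul_measureReal_lt_abs_sum_le ⟨ℱ, hmono, hle⟩ hd_meas hd_int hd_cond
    (fun k => (abs_eq zero_le_one).2 (hε k)) ht hn
  obtain ⟨m, rfl⟩ := Nat.exists_eq_add_of_le' hn
  calc ENNReal.ofReal t * P {ω | t < |∑ k ∈ Finset.Icc 1 (m + 1), ε k * d k ω|}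
      = ENNReal.ofReal (t * P.real {ω | t < |∑ k ∈ Finset.Icc 1 (m + 1), ε k * d k ω|}) := by
        rw [ENNReal.ofReal_mul ht.le, ofReal_measureReal]
    _ ≤ ENNReal.ofReal 2 * ENNReal.ofReal (∫ ω, |∑ k ∈ Finset.Icc 1 (m + 1), d k ω| ∂P) := by
        rw [← ENNReal.ofReal_mul zero_le_two]
        exact ENNReal.ofReal_le_ofReal hweak
    _ ≤ _ := by
        gcongr
        exact le_iSup (fun m : ℕ => ENNReal.ofReal (∫ ω, |∑ k ∈ Finset.Icc 1 (m + 1), d k ω| ∂P)) m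
end
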